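/- Let g : ℝ → ℝ be continuous and bounded, and let f_g(x) = e^{x²/2} ∫_{-∞}^x (g(y) − ∫ g dγ) e^{-y²/2} dy, where γ is the standard Gaussian measure on ℝ. Then f_g is continuously differentiable and for every x ∈ ℝ, |f_g'(x)| ≤ 2 · sup_{y ∈ ℝ} |g(y) − ∫ g dγ|. -/

import Mathlib

/-!
Write `h = g - ∫ g dγ` and `F x = ∫_{-∞}^x h(y) e^{-y²/2} dy`. The Stein solution `e^{x²/2} F`
satisfies the Stein equation `f' = x f + h`, so it suffices to bound `|x| e^{x²/2} |F x|` by
`sup |h|`. For `x ≤ 0` this is the Mills-ratio bound `-x ∫_{-∞}^x e^{-y²/2} dy ≤ e^{-x²/2}`; for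
`x > 0`, the identity `∫ h e^{-y²/2} = 0` turns `F x` into minus the integral over `(x, ∞)`, and
the same bound applies to that tail.
-/

open MeasureTheory ProbabilityTheory Real

/-- The Stein solution associated with `g`:
`f_g(x) = e^{x²/2} ∫_{-∞}^x (g(y) − ∫ g dγ) e^{-y²/2} dy`,
where `γ` is the standard Gaussian measure on `ℝ`. -/
noncomputable def steinSol (g : ℝ → ℝ) : ℝ → ℝ := fun x =>
  Real.exp (x ^ 2 / 2) *
    ∫ y in Set.Iic x, (g y - ∫ z, g z ∂(gaussianReal 0 1)) * Real.exp (-(y ^ 2) / 2)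

open Set Filter Topology

lemma exp_neg_sq_div_two_eq (y : ℝ) : exp (-(y ^ 2) / 2) = exp (-(1 / 2) * y ^ 2) := by
  ring_nf

lemma integrable_exp_neg_sq_div_two : Integrable fun y : ℝ => exp (-(y ^ 2) / 2) := by
  simpa only [exp_neg_sq_div_two_eq] using integrable_exp_neg_mul_sq (b := 1 / 2) (by norm_num)

lemma integrable_mul_exp_neg_sq_div_two : Integrable fun y : ℝ => y * exp (-(y ^ 2) / 2) := by
  simpa only [exp_neg_sq_div_two_eq] using
    integrable_mul_exp_neg_mul_sq (b := 1 / 2) (by norm_num)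

lemma integral_exp_neg_sq_div_two : ∫ y : ℝ, exp (-(y ^ 2) / 2) = √(2 * π) := by
  simp only [exp_neg_sq_div_two_eq, integral_gaussian]
  norm_num [div_div_eq_mul_div, mul_comm]

lemma tendsto_exp_neg_sq_div_two_cocompact :
    Tendsto (fun y : ℝ => exp (-(y ^ 2) / 2)) (cocompact ℝ) (𝓝 0) := by
  simpa [exp_neg_sq_div_two_eq] using
    tendsto_rpow_abs_mul_exp_neg_mul_sq_cocompact (a := 1 / 2) (by norm_num) 0

lemma hasDerivAt_neg_exp_neg_sq_div_two (y : ℝ) :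
    HasDerivAt (fun y : ℝ => -exp (-(y ^ 2) / 2)) (y * exp (-(y ^ 2) / 2)) y := by
  refine (((hasDerivAt_pow 2 y).neg.div_const 2).exp).neg.congr_deriv ?_
  simp only [Pi.neg_apply]
  push_cast
  ring

lemma integral_Ioi_mul_exp_neg_sq_div_two (x : ℝ) :
    ∫ y in Ioi x, y * exp (-(y ^ 2) / 2) = exp (-(x ^ 2) / 2) := by
  have hlim := (tendsto_exp_neg_sq_div_two_cocompact.mono_left atTop_le_cocompact).neg
  rw [neg_zero] at hlim
  simpa using integral_Ioi_of_hasDerivAt_of_tendsto' (fun y _ => hasDerivAt_neg_exp_neg_sq_div_two y)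
    integrable_mul_exp_neg_sq_div_two.integrableOn hlim

lemma mul_integral_Ioi_exp_neg_sq_div_two_le (x : ℝ) :
    x * ∫ y in Ioi x, exp (-(y ^ 2) / 2) ≤ exp (-(x ^ 2) / 2) := by
  rw [← integral_const_mul, ← integral_Ioi_mul_exp_neg_sq_div_two x]
  refine setIntegral_mono_on (integrable_exp_neg_sq_div_two.const_mul x).integrableOn
    integrable_mul_exp_neg_sq_div_two.integrableOn measurableSet_Ioi fun y hy => ?_
  exact mul_le_mul_of_nonneg_right (le_of_lt hy) (exp_pos _).le

lemma neg_mul_integral_Iic_exp_neg_sq_div_two_le (x : ℝ) :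
    -x * ∫ y in Iic x, exp (-(y ^ 2) / 2) ≤ exp (-(x ^ 2) / 2) := by
  have := mul_integral_Ioi_exp_neg_sq_div_two_le (-x)
  rw [← integral_comp_neg_Iic] at this
  simpa only [neg_sq] using this

lemma integral_gaussianReal_zero_one (g : ℝ → ℝ) :
    ∫ z, g z ∂gaussianReal 0 1 = (√(2 * π))⁻¹ * ∫ y, g y * exp (-(y ^ 2) / 2) := by
  rw [integral_gaussianReal_eq_integral_smul one_ne_zero, ← integral_const_mul]
  congr 1 with y
  simp only [gaussianPDFReal, smul_eq_mul]
  push_cast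
  ring_nf

lemma integral_sub_integral_gaussianReal_mul_exp {g : ℝ → ℝ}
    (hg : Integrable fun y => g y * exp (-(y ^ 2) / 2)) :
    ∫ y, (g y - ∫ z, g z ∂gaussianReal 0 1) * exp (-(y ^ 2) / 2) = 0 := by
  simp only [sub_mul]
  rw [integral_sub hg (integrable_exp_neg_sq_div_two.const_mul _), integral_const_mul,
    integral_exp_neg_sq_div_two, integral_gaussianReal_zero_one]
  field_simp
  ring

lemma integrable_mul_exp_neg_sq_div_two_of_abs_le {h : ℝ → ℝ} {M : ℝ}
    (hh : AEStronglyMeasurable h) (hM : ∀ y, |h y| ≤ M) :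
    Integrable fun y => h y * exp (-(y ^ 2) / 2) := by
  refine (integrable_exp_neg_sq_div_two.const_mul M).mono' (hh.mul (by fun_prop)) ?_
  filter_upwards with y
  rw [norm_mul, norm_of_nonneg (exp_pos _).le]
  exact mul_le_mul_of_nonneg_right (hM y) (exp_pos _).le

lemma abs_setIntegral_mul_exp_neg_sq_div_two_le {h : ℝ → ℝ} {M : ℝ} (hM : ∀ y, |h y| ≤ M)
    (s : Set ℝ) :
    |∫ y in s, h y * exp (-(y ^ 2) / 2)| ≤ M * ∫ y in s, exp (-(y ^ 2) / 2) := by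
  rw [← integral_const_mul, ← norm_eq_abs]
  refine norm_integral_le_of_norm_le (integrable_exp_neg_sq_div_two.const_mul M).integrableOn
    (ae_of_all _ fun y => ?_)
  rw [norm_mul, norm_of_nonneg (exp_pos _).le]
  exact mul_le_mul_of_nonneg_right (hM y) (exp_pos _).le

lemma abs_mul_setIntegral_Iic_mul_exp_neg_sq_div_two_le {h : ℝ → ℝ} {M : ℝ}
    (hM : ∀ y, |h y| ≤ M) (hint : Integrable fun y => h y * exp (-(y ^ 2) / 2))
    (hzero : ∫ y, h y * exp (-(y ^ 2) / 2) = 0) (x : ℝ) :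
    |x| * |∫ y in Iic x, h y * exp (-(y ^ 2) / 2)| ≤ M * exp (-(x ^ 2) / 2) := by
  have hM0 : 0 ≤ M := (abs_nonneg _).trans (hM 0)
  rcases le_or_gt x 0 with hx | hx
  · calc |x| * |∫ y in Iic x, h y * exp (-(y ^ 2) / 2)|
        ≤ -x * (M * ∫ y in Iic x, exp (-(y ^ 2) / 2)) := by
          rw [abs_of_nonpos hx]
          exact mul_le_mul_of_nonneg_left (abs_setIntegral_mul_exp_neg_sq_div_two_le hM _)
            (neg_nonneg.2 hx)
      _ = M * (-x * ∫ y in Iic x, exp (-(y ^ 2) / 2)) := by ring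
      _ ≤ M * exp (-(x ^ 2) / 2) :=
          mul_le_mul_of_nonneg_left (neg_mul_integral_Iic_exp_neg_sq_div_two_le x) hM0
  · have hIic : ∫ y in Iic x, h y * exp (-(y ^ 2) / 2)
        = -∫ y in Ioi x, h y * exp (-(y ^ 2) / 2) := by
      rw [eq_neg_iff_add_eq_zero, intervalIntegral.integral_Iic_add_Ioi hint.integrableOn
        hint.integrableOn, hzero]
    calc |x| * |∫ y in Iic x, h y * exp (-(y ^ 2) / 2)|
        ≤ x * (M * ∫ y in Ioi x, exp (-(y ^ 2) / 2)) := by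
          rw [hIic, abs_neg, abs_of_pos hx]
          exact mul_le_mul_of_nonneg_left (abs_setIntegral_mul_exp_neg_sq_div_two_le hM _) hx.le
      _ = M * (x * ∫ y in Ioi x, exp (-(y ^ 2) / 2)) := by ring
      _ ≤ M * exp (-(x ^ 2) / 2) :=
          mul_le_mul_of_nonneg_left (mul_integral_Ioi_exp_neg_sq_div_two_le x) hM0

lemma hasDerivAt_setIntegral_Iic {E : Type*} [NormedAddCommGroup E] [NormedSpace ℝ E]
    [CompleteSpace E] {f : ℝ → E} (hf : Continuous f) (hfi : Integrable f) (x : ℝ) :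
    HasDerivAt (fun u => ∫ y in Iic u, f y) (f x) x := by
  have hsplit : (fun u => ∫ y in Iic u, f y) = fun u => (∫ y in Iic x, f y) + ∫ y in x..u, f y := by
    ext u
    rw [← intervalIntegral.integral_Iic_sub_Iic hfi.integrableOn hfi.integrableOn]
    abel
  rw [hsplit]
  exact (intervalIntegral.integral_hasDerivAt_right hfi.intervalIntegrable
    hf.stronglyMeasurable.stronglyMeasurableAtFilter hf.continuousAt).const_add _

lemma exp_sq_div_two_mul_exp_neg_sq_div_two (x : ℝ) :
    exp (x ^ 2 / 2) * exp (-(x ^ 2) / 2) = 1 := by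
  rw [← exp_add, ← exp_zero]
  ring_nf

section SteinSolution

variable {g : ℝ → ℝ} (hgw : Integrable fun y => g y * exp (-(y ^ 2) / 2))
include hgw

lemma integrable_sub_integral_gaussianReal_mul_exp :
    Integrable fun y => (g y - ∫ z, g z ∂gaussianReal 0 1) * exp (-(y ^ 2) / 2) := by
  simpa only [sub_mul] using hgw.sub' (integrable_exp_neg_sq_div_two.const_mul _)

lemma hasDerivAt_steinSol (hg : Continuous g) (x : ℝ) :
    HasDerivAt (steinSol g) (x * steinSol g x + (g x - ∫ z, g z ∂gaussianReal 0 1)) x := by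
  have hexp : HasDerivAt (fun x : ℝ => exp (x ^ 2 / 2)) (x * exp (x ^ 2 / 2)) x := by
    refine ((hasDerivAt_pow 2 x).div_const 2).exp.congr_deriv ?_
    push_cast
    ring
  refine (hexp.mul (hasDerivAt_setIntegral_Iic (by fun_prop)
    (integrable_sub_integral_gaussianReal_mul_exp hgw) x)).congr_deriv ?_
  unfold steinSol
  linear_combination (g x - ∫ z, g z ∂gaussianReal 0 1) *
    exp_sq_div_two_mul_exp_neg_sq_div_two x

lemma abs_mul_steinSol_le {M : ℝ} (hM : ∀ y, |g y - ∫ z, g z ∂gaussianReal 0 1| ≤ M) (x : ℝ) :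
    |x * steinSol g x| ≤ M := by
  have hbound := abs_mul_setIntegral_Iic_mul_exp_neg_sq_div_two_le hM
    (integrable_sub_integral_gaussianReal_mul_exp hgw)
    (integral_sub_integral_gaussianReal_mul_exp hgw) x
  calc |x * steinSol g x|
      = exp (x ^ 2 / 2) * (|x| * |∫ y in Iic x,
          (g y - ∫ z, g z ∂gaussianReal 0 1) * exp (-(y ^ 2) / 2)|) := by
        rw [steinSol, abs_mul, abs_mul, abs_of_pos (exp_pos _)]
        ring
    _ ≤ exp (x ^ 2 / 2) * (M * exp (-(x ^ 2) / 2)) :=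
        mul_le_mul_of_nonneg_left hbound (exp_pos _).le
    _ = M := by
        linear_combination M * exp_sq_div_two_mul_exp_neg_sq_div_two x

end SteinSolution

/-- For continuous bounded `g`, the Stein solution `f_g` is continuously differentiable
and `|f_g'(x)| ≤ 2 · sup_y |g(y) − ∫ g dγ|` for every `x`. -/
theorem stmt_3 (g : ℝ → ℝ) (hg : Continuous g) (hgb : ∃ C, ∀ x, |g x| ≤ C) :
    ContDiff ℝ 1 (steinSol g) ∧
      ∀ x : ℝ, |deriv (steinSol g) x|
        ≤ 2 * ⨆ y : ℝ, |g y - ∫ z, g z ∂(gaussianReal 0 1)| := by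
  obtain ⟨C, hC⟩ := hgb
  set m := ∫ z, g z ∂gaussianReal 0 1
  have hgw := integrable_mul_exp_neg_sq_div_two_of_abs_le hg.aestronglyMeasurable hC
  have hderiv := hasDerivAt_steinSol hgw hg
  have hdiff : Differentiable ℝ (steinSol g) := fun x => (hderiv x).differentiableAt
  have hderiv_eq : deriv (steinSol g) = fun x => x * steinSol g x + (g x - m) :=
    funext fun x => (hderiv x).deriv
  have hbdd : BddAbove (range fun y => |g y - m|) :=
    ⟨C + |m|, forall_mem_range.2 fun y => (abs_sub _ _).trans (add_le_add_left (hC y) _)⟩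
  have hle_sup : ∀ y, |g y - m| ≤ ⨆ y, |g y - m| := le_ciSup hbdd
  refine ⟨contDiff_one_iff_deriv.2 ⟨hdiff, ?_⟩, fun x => ?_⟩
  · rw [hderiv_eq]
    exact (continuous_id.mul hdiff.continuous).add (hg.sub continuous_const)
  · rw [hderiv_eq, two_mul]
    exact (abs_add_le _ _).trans (add_le_add (abs_mul_steinSol_le hgw hle_sup x) (hle_sup x))
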